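/- For every n ≥ 1, the set UC(R^n) ∩ L^∞(R^n) of bounded uniformly continuous functions is not dense in VMO(R^n) with respect to the BMO seminorm: there exist f ∈ VMO(R^n) and δ > 0 such that ||f − g||_BMO ≥ δ for every bounded uniformly continuous g : R^n → C. -/

import Mathlib

open MeasureTheory Filter Topology ENNReal

noncomputable section

/-- `ℝ^d` with the Euclidean norm. -/
abbrev Edge (d : ℕ) := EuclideanSpace ℝ (Fin d)

/-- `ℂ^M` with the Euclidean (Hermitian) norm. -/
abbrev Vec (M : ℕ) := EuclideanSpace ℂ (Fin M)

/-- The (closed) axis-parallel cube in `ℝ^d` with center `c` and side-length `ℓ`. -/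
def cube {d : ℕ} (c : Edge d) (ℓ : ℝ) : Set (Edge d) :=
  {x | ∀ i, |x i - c i| ≤ ℓ / 2}

/-- The average `f_Q` of `f` over the cube with center `c` and side-length `ℓ`
(such a cube has Lebesgue measure `ℓ ^ d`). -/
def cubeAvg {d : ℕ} {V : Type*} [NormedAddCommGroup V] [NormedSpace ℝ V]
    (f : Edge d → V) (c : Edge d) (ℓ : ℝ) : V :=
  (ℓ ^ d)⁻¹ • ∫ x in cube c ℓ, f x

/-- The mean oscillation `(1/|Q|) ∫_Q ‖f - f_Q‖` over the cube with center `c` and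
side-length `ℓ`, valued in `ℝ≥0∞`. -/
def meanOsc {d : ℕ} {V : Type*} [NormedAddCommGroup V] [NormedSpace ℝ V]
    (f : Edge d → V) (c : Edge d) (ℓ : ℝ) : ℝ≥0∞ :=
  (ENNReal.ofReal (ℓ ^ d))⁻¹ * ∫⁻ x in cube c ℓ, (‖f x - cubeAvg f c ℓ‖₊ : ℝ≥0∞)

/-- The BMO seminorm `sup_Q (1/|Q|) ∫_Q ‖f - f_Q‖`, valued in `ℝ≥0∞`. -/
def bmoSeminorm {d : ℕ} {V : Type*} [NormedAddCommGroup V] [NormedSpace ℝ V]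
    (f : Edge d → V) : ℝ≥0∞ :=
  ⨆ (c : Edge d) (ℓ : {r : ℝ // 0 < r}), meanOsc f c ℓ.1

/-- `osc₁(f; r)`: the supremum of the mean oscillations of `f` over all cubes of
side-length at most `r`. -/
def osc1 {d : ℕ} {V : Type*} [NormedAddCommGroup V] [NormedSpace ℝ V]
    (f : Edge d → V) (r : ℝ) : ℝ≥0∞ :=
  ⨆ (c : Edge d) (ℓ : {s : ℝ // 0 < s ∧ s ≤ r}), meanOsc f c ℓ.1

/-- Membership in `BMO`: locally integrable with finite BMO seminorm. -/
def MemBMO {d : ℕ} {V : Type*} [NormedAddCommGroup V] [NormedSpace ℝ V]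
    (f : Edge d → V) : Prop :=
  LocallyIntegrable f volume ∧ bmoSeminorm f < ⊤

/-- Membership in Sarason's space `VMO`: in `BMO`, with mean oscillations over small
cubes tending to `0` uniformly as the side-length shrinks to `0`. -/
def MemVMO {d : ℕ} {V : Type*} [NormedAddCommGroup V] [NormedSpace ℝ V]
    (f : Edge d → V) : Prop :=
  MemBMO f ∧ Tendsto (fun r : ℝ => osc1 f r) (𝓝[>] 0) (𝓝 0)

/-! ### Auxiliary 1D material -/

section OneDim
open Set intervalIntegral

/-- The profile function `t ↦ log (1 + |t|)`. -/
def phi (t : ℝ) : ℝ := Real.log (1 + |t|)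

def Fa (t : ℝ) : ℝ := (1+t) * Real.log (1+t) - t
def Ga (t : ℝ) : ℝ := -((1-t) * Real.log (1-t)) - t

lemma phi_nonneg (t : ℝ) : 0 ≤ phi t := Real.log_nonneg (by simp [abs_nonneg])

lemma continuous_phi : Continuous phi :=
  (continuous_const.add continuous_abs).log (fun t => (by positivity : (1:ℝ) + |t| ≠ 0))

lemma phi_lip (s t : ℝ) : |phi s - phi t| ≤ |s - t| := by
  have key : ∀ u v : ℝ, phi u - phi v ≤ |u - v| := by
    intro u v
    rcases le_or_gt |u| |v| with h | h
    · have : phi u ≤ phi v := Real.log_le_log (by positivity) (by linarith)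
      have := abs_nonneg (u - v); linarith
    · have h1 : phi u - phi v = Real.log ((1+|u|)/(1+|v|)) := by
        rw [Real.log_div (by positivity) (by positivity)]; rfl
      rw [h1]
      have h2 : Real.log ((1+|u|)/(1+|v|)) ≤ (1+|u|)/(1+|v|) - 1 :=
        Real.log_le_sub_one_of_pos (by positivity)
      have h3 : (1+|u|)/(1+|v|) - 1 = (|u|-|v|)/(1+|v|) := by
        field_simp; ring
      have h4 : (|u|-|v|)/(1+|v|) ≤ |u|-|v| := by
        apply div_le_self (by linarith) (by linarith [abs_nonneg v])
      have h5 : |u| - |v| ≤ |u - v| := abs_sub_abs_le_abs_sub u v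
      linarith
  rw [abs_sub_le_iff]
  exact ⟨key s t, by rw [abs_sub_comm]; exact key t s⟩

lemma hasDerivAt_Fa (t : ℝ) (ht : -1 < t) : HasDerivAt Fa (Real.log (1+t)) t := by
  have h1 : HasDerivAt (fun t : ℝ => 1 + t) 1 t := (hasDerivAt_id t).const_add 1
  have h2 : HasDerivAt (fun t : ℝ => Real.log (1+t)) (1/(1+t)) t := by
    simpa [Function.comp_def] using (Real.hasDerivAt_log (by linarith)).comp t h1
  have h3 := (h1.mul h2)
  have h4 := h3.sub (hasDerivAt_id t)
  refine HasDerivAt.congr_deriv (f := Fa) h4 ?_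
  have hne : (1:ℝ) + t ≠ 0 := by linarith
  field_simp
  ring

lemma hasDerivAt_Ga (t : ℝ) (ht : t < 1) : HasDerivAt Ga (Real.log (1-t)) t := by
  have h1 : HasDerivAt (fun t : ℝ => 1 - t) (-1) t := by
    simpa using ((hasDerivAt_id t).const_sub 1)
  have h2 : HasDerivAt (fun t : ℝ => Real.log (1-t)) (-1/(1-t)) t := by
    have := (Real.hasDerivAt_log (by linarith : (1:ℝ)-t ≠ 0)).comp t h1
    simpa [div_eq_mul_inv, mul_comm, Function.comp_def] using this
  have h3 := ((h1.mul h2).neg).sub (hasDerivAt_id t)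
  refine HasDerivAt.congr_deriv (f := Ga) h3 ?_
  have hne : (1:ℝ) - t ≠ 0 := by linarith
  field_simp
  ring

lemma integral_phi_nonneg_case (a b : ℝ) (h0 : 0 ≤ a) (hab : a ≤ b) :
    ∫ t in a..b, phi t = Fa b - Fa a := by
  have hcong : EqOn phi (fun t => Real.log (1+t)) (uIcc a b) := by
    intro t ht
    rw [uIcc_of_le hab] at ht
    simp [phi, abs_of_nonneg (le_trans h0 ht.1)]
  rw [intervalIntegral.integral_congr hcong]
  exact integral_eq_sub_of_hasDerivAt
    (fun t ht => hasDerivAt_Fa t (by rw [uIcc_of_le hab] at ht; linarith [ht.1]))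
    (((continuous_const.add continuous_id).continuousOn.log (fun t ht => by
      rw [uIcc_of_le hab] at ht; have := ht.1; simp; nlinarith)).intervalIntegrable)

lemma integral_phi_nonpos_case (a b : ℝ) (hb : b ≤ 0) (hab : a ≤ b) :
    ∫ t in a..b, phi t = Ga b - Ga a := by
  have hcong : EqOn phi (fun t => Real.log (1-t)) (uIcc a b) := by
    intro t ht
    rw [uIcc_of_le hab] at ht
    have : t ≤ 0 := le_trans ht.2 hb
    simp [phi, abs_of_nonpos this]
    ring_nf
  rw [intervalIntegral.integral_congr hcong]
  exact integral_eq_sub_of_hasDerivAt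
    (fun t ht => hasDerivAt_Ga t (by rw [uIcc_of_le hab] at ht; have := le_trans ht.2 hb; linarith))
    (((continuous_const.sub continuous_id).continuousOn.log (fun t ht => by
      rw [uIcc_of_le hab] at ht; have := le_trans ht.2 hb; simp; nlinarith)).intervalIntegrable)

lemma intervalIntegrable_phi (a b : ℝ) : IntervalIntegrable phi volume a b :=
  continuous_phi.intervalIntegrable a b

lemma log_clear (x y : ℝ) (hx : 0 < x) (hxy : x ≤ y) :
    x * Real.log y ≤ x * Real.log x + (y - x) := by
  have h1 : Real.log y - Real.log x = Real.log (y / x) := (Real.log_div (lt_of_lt_of_le hx hxy).ne' hx.ne').symm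
  have h2 : Real.log (y / x) ≤ y / x - 1 := Real.log_le_sub_one_of_pos (div_pos (lt_of_lt_of_le hx hxy) hx)
  have h3 : x * (Real.log y - Real.log x) ≤ x * (y/x - 1) := by
    rw [h1]; exact mul_le_mul_of_nonneg_left h2 hx.le
  have h4 : x * (y/x - 1) = y - x := by field_simp
  nlinarith

/-- Key 1D estimate: the average of `log(1+max(|a|,|b|)) - phi` over `[a,b]` is at most 2. -/
lemma key1D (a b : ℝ) (hab : a < b) :
    ∫ t in a..b, (Real.log (1 + max |a| |b|) - phi t) ≤ 2 * (b - a) := by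
  set m : ℝ := Real.log (1 + max |a| |b|) with hm
  have hconst : ∫ t in a..b, (m - phi t) = (b - a) * m - ∫ t in a..b, phi t := by
    rw [intervalIntegral.integral_sub (intervalIntegrable_const) (intervalIntegrable_phi a b),
      intervalIntegral.integral_const, smul_eq_mul]
  rw [hconst]
  rcases le_or_gt 0 a with h0a | h0a
  · have hmax : max |a| |b| = b := by
      rw [abs_of_nonneg h0a, abs_of_nonneg (by linarith)]
      exact max_eq_right (by linarith)
    rw [integral_phi_nonneg_case a b h0a hab.le]
    have hlog : Real.log (1+a) ≤ Real.log (1+b) := Real.log_le_log (by linarith) (by linarith)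
    simp only [hm, hmax, Fa]
    nlinarith [Real.log_nonneg (by linarith : (1:ℝ) ≤ 1 + b)]
  rcases le_or_gt b 0 with hb0 | hb0
  · have hmax : max |a| |b| = -a := by
      rw [abs_of_nonpos (by linarith), abs_of_nonpos hb0]
      exact max_eq_left (by linarith)
    rw [integral_phi_nonpos_case a b hb0 hab.le]
    have hlog : Real.log (1-b) ≤ Real.log (1-a) := Real.log_le_log (by linarith) (by linarith)
    simp only [hm, hmax, Ga]
    have : (1:ℝ) + -a = 1 - a := by ring
    rw [this]
    nlinarith [Real.log_nonneg (by linarith : (1:ℝ) ≤ 1 - b)]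
  · have hsplit : ∫ t in a..b, phi t = (Ga 0 - Ga a) + (Fa b - Fa 0) := by
      rw [← integral_phi_nonpos_case a 0 le_rfl h0a.le, ← integral_phi_nonneg_case 0 b le_rfl hb0.le]
      exact (intervalIntegral.integral_add_adjacent_intervals
        (intervalIntegrable_phi a 0) (intervalIntegrable_phi 0 b)).symm
    have hGa0 : Ga 0 = 0 := by simp [Ga]
    have hFa0 : Fa 0 = 0 := by simp [Fa]
    rw [hsplit, hGa0, hFa0]
    have habs : |a| = -a := abs_of_nonpos h0a.le
    have hbbs : |b| = b := abs_of_nonneg hb0.le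
    have hLa : (0:ℝ) ≤ Real.log (1 - a) := Real.log_nonneg (by linarith)
    have hLb : (0:ℝ) ≤ Real.log (1 + b) := Real.log_nonneg (by linarith)
    rcases le_or_gt (-a) b with hc | hc
    · have hmax : max |a| |b| = b := by rw [habs, hbbs]; exact max_eq_right (by linarith)
      have hcl := log_clear (1 - a) (1 + b) (by linarith) (by linarith)
      simp only [hm, hmax, Fa, Ga]
      nlinarith
    · have hmax : max |a| |b| = -a := by rw [habs, hbbs]; exact max_eq_left (by linarith)
      have hcl := log_clear (1 + b) (1 - a) (by linarith) (by linarith)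
      simp only [hm, hmax, Fa, Ga]
      have : (1:ℝ) + -a = 1 - a := by ring
      rw [this]
      nlinarith

end OneDim

/-! ### Cube lemmas -/

open Set in
lemma cube_eq {d : ℕ} (c : Edge d) (ℓ : ℝ) :
    cube c ℓ = (MeasurableEquiv.toLp 2 (Fin d → ℝ)).symm ⁻¹'
      (univ.pi fun i => Icc (c i - ℓ/2) (c i + ℓ/2)) := by
  ext x
  simp only [cube, mem_setOf_eq, mem_preimage, Set.mem_pi, mem_univ, true_implies, mem_Icc]
  refine forall_congr' fun i => ?_
  show |x i - c i| ≤ ℓ/2 ↔ x i ∈ Icc (c i - ℓ/2) (c i + ℓ/2)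
  rw [abs_le, mem_Icc]
  constructor <;> rintro ⟨h1, h2⟩ <;> constructor <;> linarith

open Set in
/-- Factorization of the integral of a function of one coordinate over a cube. -/
lemma cube_integral_factor {d : ℕ} (c : Edge d) {ℓ : ℝ} (hℓ : 0 < ℓ) (i0 : Fin d) (G : ℝ → ℝ) :
    ∫ x in cube c ℓ, G (x i0) = ℓ ^ (d - 1) * ∫ t in Icc (c i0 - ℓ/2) (c i0 + ℓ/2), G t := by
  have h1 : ∫ x in cube c ℓ, G (x i0) =
      ∫ y in univ.pi (fun i => Icc (c i - ℓ/2) (c i + ℓ/2)), G (y i0)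
        ∂(volume : Measure (Fin d → ℝ)) := by
    rw [cube_eq]
    exact (EuclideanSpace.volume_preserving_symm_measurableEquiv_toLp (Fin d)).setIntegral_preimage_emb
      (MeasurableEquiv.measurableEmbedding _) (fun y => G (y i0)) _
  set I : Fin d → Set ℝ := fun i => Icc (c i - ℓ/2) (c i + ℓ/2) with hI
  have hmeas : MeasurableSet (univ.pi I) := MeasurableSet.univ_pi fun i => measurableSet_Icc
  rw [h1, ← integral_indicator (f := fun y : Fin d → ℝ => G (y i0)) hmeas]
  have h2 : ∀ y : Fin d → ℝ, (univ.pi I).indicator (fun y => G (y i0)) y =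
      ∏ i, (fun i (t : ℝ) => if i = i0 then (I i).indicator G t else (I i).indicator 1 t) i (y i) := by
    intro y
    by_cases hy : y ∈ univ.pi I
    · rw [indicator_of_mem hy]
      have hmem : ∀ i, y i ∈ I i := fun i => hy i (mem_univ i)
      rw [Finset.prod_eq_single i0]
      · simp [indicator_of_mem (hmem i0)]
      · intro i _ hne
        simp [hne, indicator_of_mem (hmem i)]
      · simp
    · rw [indicator_of_notMem hy]
      simp only [Set.mem_pi, mem_univ, true_implies, not_forall] at hy
      obtain ⟨j, hj⟩ := hy
      refine (Finset.prod_eq_zero (Finset.mem_univ j) ?_).symm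
      by_cases hje : j = i0
      · subst hje; simp [indicator_of_notMem hj]
      · simp [hje, indicator_of_notMem hj]
  rw [show (fun y : Fin d → ℝ => (univ.pi I).indicator (fun y => G (y i0)) y) = _ from funext h2]
  rw [volume_pi, MeasureTheory.integral_fintype_prod_eq_prod (𝕜 := ℝ)
    (f := fun i (t : ℝ) => if i = i0 then (I i).indicator G t else (I i).indicator 1 t)]
  rw [← Finset.prod_compl_mul_prod {i0}]
  have hA : ∀ i ∈ ({i0}ᶜ : Finset (Fin d)),
      (∫ t : ℝ, (fun t : ℝ => if i = i0 then (I i).indicator G t else (I i).indicator 1 t) t) = ℓ := by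
    intro i hi
    have hne : i ≠ i0 := by simpa using hi
    simp only [hne, if_false]
    rw [integral_indicator measurableSet_Icc]
    simp only [Pi.one_apply]
    rw [setIntegral_const, smul_eq_mul, mul_one, measureReal_def, Real.volume_Icc,
      show c i + ℓ/2 - (c i - ℓ/2) = ℓ by ring, ENNReal.toReal_ofReal hℓ.le]
  rw [Finset.prod_congr rfl hA, Finset.prod_const, Finset.prod_singleton]
  simp only [if_true, eq_self_iff_true, if_pos]
  rw [integral_indicator measurableSet_Icc]
  congr 2
  rw [Finset.card_compl, Finset.card_singleton, Fintype.card_fin]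

section Generic
open Set
variable {d : ℕ} {V : Type*} [NormedAddCommGroup V] [NormedSpace ℝ V] [CompleteSpace V]

lemma volume_cube (c : Edge d) {ℓ : ℝ} (hℓ : 0 ≤ ℓ) :
    volume (cube c ℓ) = ENNReal.ofReal ℓ ^ d := by
  rw [cube_eq, (EuclideanSpace.volume_preserving_symm_measurableEquiv_toLp (Fin d)).measure_preimage
    ((MeasurableSet.univ_pi fun i => measurableSet_Icc).nullMeasurableSet),
    volume_pi_pi]
  have : ∀ i : Fin d, ENNReal.ofReal (c i + ℓ / 2 - (c i - ℓ / 2)) = ENNReal.ofReal ℓ := by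
    intro i; congr 1; ring
  simp only [Real.volume_Icc, this, Finset.prod_const, Finset.card_univ, Fintype.card_fin]

lemma volume_cube_toReal (c : Edge d) {ℓ : ℝ} (hℓ : 0 ≤ ℓ) :
    (volume (cube c ℓ)).toReal = ℓ ^ d := by
  rw [volume_cube c hℓ, ← ENNReal.ofReal_pow hℓ, ENNReal.toReal_ofReal (by positivity)]

lemma isCompact_cube (c : Edge d) (ℓ : ℝ) : IsCompact (cube c ℓ) := by
  rw [cube_eq]
  have h : IsCompact (univ.pi fun i : Fin d => Icc (c i - ℓ/2) (c i + ℓ/2)) :=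
    isCompact_univ_pi fun i => isCompact_Icc
  have hcont : Continuous (MeasurableEquiv.toLp 2 (Fin d → ℝ)).symm.symm := by
    rw [MeasurableEquiv.symm_symm, MeasurableEquiv.coe_toLp]
    exact PiLp.continuous_toLp 2 _
  rw [← MeasurableEquiv.image_symm]
  exact h.image hcont

lemma measurableSet_cube (c : Edge d) (ℓ : ℝ) : MeasurableSet (cube c ℓ) :=
  (isCompact_cube c ℓ).isClosed.measurableSet

lemma volume_cube_lt_top (c : Edge d) (ℓ : ℝ) : volume (cube c ℓ) < ⊤ :=
  (isCompact_cube c ℓ).measure_lt_top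

omit [NormedSpace ℝ V] [CompleteSpace V] in
lemma integrableOn_cube {h : Edge d → V} (hh : Continuous h) (c : Edge d) (ℓ : ℝ) :
    IntegrableOn h (cube c ℓ) volume :=
  hh.continuousOn.integrableOn_compact (isCompact_cube c ℓ)

lemma cubeAvg_sub_const {h : Edge d → V} (hh : Continuous h) (c : Edge d) {ℓ : ℝ} (hℓ : 0 < ℓ)
    (v : V) : cubeAvg h c ℓ - v = (ℓ ^ d)⁻¹ • ∫ x in cube c ℓ, (h x - v) := by
  rw [integral_sub (integrableOn_cube hh c ℓ)
    (integrableOn_const (volume_cube_lt_top c ℓ).ne enorm_ne_top)]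
  rw [setIntegral_const, smul_sub, measureReal_def, volume_cube_toReal c hℓ.le, cubeAvg, smul_smul,
    inv_mul_cancel₀ (by positivity), one_smul]

lemma norm_cubeAvg_sub {h : Edge d → V} (hh : Continuous h) (c : Edge d) {ℓ : ℝ} (hℓ : 0 < ℓ)
    (v : V) : ‖cubeAvg h c ℓ - v‖ ≤ (ℓ ^ d)⁻¹ * ∫ x in cube c ℓ, ‖h x - v‖ := by
  rw [cubeAvg_sub_const hh c hℓ v, norm_smul, norm_inv, Real.norm_of_nonneg (by positivity)]
  exact mul_le_mul_of_nonneg_left (norm_integral_le_integral_norm _) (by positivity)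

lemma meanOsc_eq {h : Edge d → V} (hh : Continuous h) (c : Edge d) {ℓ : ℝ} (hℓ : 0 < ℓ) :
    meanOsc h c ℓ =
      ENNReal.ofReal ((ℓ ^ d)⁻¹ * ∫ x in cube c ℓ, ‖h x - cubeAvg h c ℓ‖) := by
  have hint : Integrable (fun x => h x - cubeAvg h c ℓ) (volume.restrict (cube c ℓ)) :=
    (integrableOn_cube (hh.sub continuous_const) c ℓ)
  rw [meanOsc]
  simp only [← enorm_eq_nnnorm]
  rw [← ofReal_integral_norm_eq_lintegral_enorm hint,
    ENNReal.ofReal_mul (by positivity), ← ENNReal.ofReal_inv_of_pos (by positivity)]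

lemma meanOsc_le_of_const {h : Edge d → V} (hh : Continuous h) (c : Edge d) {ℓ : ℝ}
    (hℓ : 0 < ℓ) (m : V) :
    meanOsc h c ℓ ≤ ENNReal.ofReal (2 * ((ℓ ^ d)⁻¹ * ∫ x in cube c ℓ, ‖h x - m‖)) := by
  rw [meanOsc_eq hh c hℓ]
  apply ENNReal.ofReal_le_ofReal
  set A : ℝ := (ℓ ^ d)⁻¹ * ∫ x in cube c ℓ, ‖h x - m‖ with hA
  have havg : ‖cubeAvg h c ℓ - m‖ ≤ A := norm_cubeAvg_sub hh c hℓ m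
  have hptw : ∀ x ∈ cube c ℓ, ‖h x - cubeAvg h c ℓ‖ ≤ ‖h x - m‖ + A := by
    intro x _
    have heq : h x - cubeAvg h c ℓ = (h x - m) + (m - cubeAvg h c ℓ) := by abel
    calc ‖h x - cubeAvg h c ℓ‖ ≤ ‖h x - m‖ + ‖m - cubeAvg h c ℓ‖ := by
          rw [heq]; exact norm_add_le _ _
      _ ≤ ‖h x - m‖ + A := by rw [norm_sub_rev m]; linarith
  have hint1 : IntegrableOn (fun x => ‖h x - cubeAvg h c ℓ‖) (cube c ℓ) volume :=
    (integrableOn_cube (hh.sub continuous_const) c ℓ).norm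
  have hint2 : IntegrableOn (fun x => ‖h x - m‖ + A) (cube c ℓ) volume :=
    ((integrableOn_cube (hh.sub continuous_const) c ℓ).norm).add
      (integrableOn_const (volume_cube_lt_top c ℓ).ne enorm_ne_top)
  have hmono := setIntegral_mono_on hint1 hint2 (measurableSet_cube c ℓ) hptw
  have hAdd : ∫ x in cube c ℓ, (‖h x - m‖ + A) = (∫ x in cube c ℓ, ‖h x - m‖) + A * ℓ ^ d := by
    rw [integral_add (f := fun x => ‖h x - m‖) (g := fun _ => A)
      ((integrableOn_cube (hh.sub continuous_const) c ℓ).norm)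
      (integrableOn_const (volume_cube_lt_top c ℓ).ne enorm_ne_top),
      setIntegral_const, smul_eq_mul, measureReal_def, volume_cube_toReal c hℓ.le, mul_comm]
  have hpow : (0:ℝ) < ℓ ^ d := by positivity
  calc (ℓ ^ d)⁻¹ * ∫ x in cube c ℓ, ‖h x - cubeAvg h c ℓ‖
      ≤ (ℓ ^ d)⁻¹ * ((∫ x in cube c ℓ, ‖h x - m‖) + A * ℓ ^ d) := by
        apply mul_le_mul_of_nonneg_left _ (by positivity)
        rw [← hAdd]; exact hmono
    _ = 2 * A := by
        rw [hA]
        have hpow' : (ℓ:ℝ) ^ d ≠ 0 := by positivity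
        field_simp
        ring

lemma meanOsc_le_of_ptwise {h : Edge d → V} (hh : Continuous h) (c : Edge d) {ℓ : ℝ}
    (hℓ : 0 < ℓ) (m : V) {M : ℝ} (hM : 0 ≤ M) (hb : ∀ x ∈ cube c ℓ, ‖h x - m‖ ≤ M) :
    meanOsc h c ℓ ≤ ENNReal.ofReal (2 * M) := by
  refine le_trans (meanOsc_le_of_const hh c hℓ m) (ENNReal.ofReal_le_ofReal ?_)
  have hpow : (0:ℝ) < ℓ ^ d := by positivity
  have hint1 : IntegrableOn (fun x => ‖h x - m‖) (cube c ℓ) volume :=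
    (integrableOn_cube (hh.sub continuous_const) c ℓ).norm
  have h1 : ∫ x in cube c ℓ, ‖h x - m‖ ≤ ∫ _x in cube c ℓ, M :=
    setIntegral_mono_on hint1 (integrableOn_const (volume_cube_lt_top c ℓ).ne enorm_ne_top)
      (measurableSet_cube c ℓ) hb
  rw [setIntegral_const, smul_eq_mul, measureReal_def, volume_cube_toReal c hℓ.le] at h1
  have h2 : (ℓ ^ d)⁻¹ * ∫ x in cube c ℓ, ‖h x - m‖ ≤ M := by
    rw [inv_mul_le_iff₀ hpow]
    linarith [h1]
  linarith

lemma avg_nested {h : Edge d → V} (hh : Continuous h) {c c' : Edge d} {ℓ ℓ' : ℝ}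
    (hℓ : 0 < ℓ) (hℓ' : 0 < ℓ') (hsub : cube c ℓ ⊆ cube c' ℓ') {δ : ℝ} (hδ : 0 ≤ δ)
    (hosc : meanOsc h c' ℓ' ≤ ENNReal.ofReal δ) :
    ‖cubeAvg h c ℓ - cubeAvg h c' ℓ'‖ ≤ (ℓ' ^ d / ℓ ^ d) * δ := by
  have hX : (ℓ' ^ d)⁻¹ * ∫ x in cube c' ℓ', ‖h x - cubeAvg h c' ℓ'‖ ≤ δ := by
    rw [meanOsc_eq hh c' hℓ'] at hosc
    exact (ENNReal.ofReal_le_ofReal_iff hδ).1 hosc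
  have h1 : ‖cubeAvg h c ℓ - cubeAvg h c' ℓ'‖ ≤
      (ℓ ^ d)⁻¹ * ∫ x in cube c ℓ, ‖h x - cubeAvg h c' ℓ'‖ :=
    norm_cubeAvg_sub hh c hℓ _
  have h2 : ∫ x in cube c ℓ, ‖h x - cubeAvg h c' ℓ'‖ ≤
      ∫ x in cube c' ℓ', ‖h x - cubeAvg h c' ℓ'‖ := by
    apply setIntegral_mono_set ((integrableOn_cube (hh.sub continuous_const) c' ℓ').norm)
      (Filter.Eventually.of_forall fun x => norm_nonneg _)
      (HasSubset.Subset.eventuallyLE hsub)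
  have hpow : (0:ℝ) < ℓ ^ d := by positivity
  have hpow' : (0:ℝ) < ℓ' ^ d := by positivity
  calc ‖cubeAvg h c ℓ - cubeAvg h c' ℓ'‖
      ≤ (ℓ ^ d)⁻¹ * ∫ x in cube c ℓ, ‖h x - cubeAvg h c' ℓ'‖ := h1
    _ ≤ (ℓ ^ d)⁻¹ * ∫ x in cube c' ℓ', ‖h x - cubeAvg h c' ℓ'‖ := by
        exact mul_le_mul_of_nonneg_left h2 (by positivity)
    _ = (ℓ' ^ d / ℓ ^ d) * ((ℓ' ^ d)⁻¹ * ∫ x in cube c' ℓ', ‖h x - cubeAvg h c' ℓ'‖) := by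
        field_simp
    _ ≤ (ℓ' ^ d / ℓ ^ d) * δ := mul_le_mul_of_nonneg_left hX (by positivity)

lemma cube_mono (c : Edge d) {ℓ ℓ' : ℝ} (h : ℓ ≤ ℓ') : cube c ℓ ⊆ cube c ℓ' := by
  intro x hx i
  exact le_trans (hx i) (by linarith)

end Generic

/-! ### The function `f x = log (1 + |x i0|)` -/

section MainPart
open Set

variable {n : ℕ}

/-- The VMO function exhibiting non-density. -/
def fdef (n : ℕ) (i0 : Fin n) : Edge n → ℂ := fun x => ((phi (x i0) : ℝ) : ℂ)

lemma continuous_coord (i0 : Fin n) : Continuous (fun x : Edge n => x i0) := by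
  have h := (PiLp.continuousLinearEquiv 2 ℝ (fun _ : Fin n => ℝ)).continuous
  exact (continuous_apply i0).comp h

lemma continuous_fdef (i0 : Fin n) : Continuous (fdef n i0) :=
  Complex.continuous_ofReal.comp (continuous_phi.comp (continuous_coord i0))

lemma norm_fdef_sub (i0 : Fin n) (x : Edge n) (r : ℝ) :
    ‖fdef n i0 x - (r:ℂ)‖ = |phi (x i0) - r| := by
  rw [fdef, ← Complex.ofReal_sub, Complex.norm_real, Real.norm_eq_abs]

lemma meanOsc_fdef_le_side (i0 : Fin n) (c : Edge n) {ℓ : ℝ} (hℓ : 0 < ℓ) :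
    meanOsc (fdef n i0) c ℓ ≤ ENNReal.ofReal ℓ := by
  have h := meanOsc_le_of_ptwise (continuous_fdef i0) c hℓ ((phi (c i0) : ℝ) : ℂ)
    (M := ℓ/2) (by linarith) ?_
  · calc meanOsc (fdef n i0) c ℓ ≤ ENNReal.ofReal (2 * (ℓ/2)) := h
      _ = ENNReal.ofReal ℓ := by rw [show 2 * (ℓ/2) = ℓ by ring]
  · intro x hx
    rw [norm_fdef_sub]
    exact le_trans (phi_lip _ _) (hx i0)

lemma meanOsc_fdef_le_four (hn : 1 ≤ n) (i0 : Fin n) (c : Edge n) {ℓ : ℝ} (hℓ : 0 < ℓ) :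
    meanOsc (fdef n i0) c ℓ ≤ ENNReal.ofReal 4 := by
  set a : ℝ := c i0 - ℓ/2 with ha
  set b : ℝ := c i0 + ℓ/2 with hb
  have hab : a < b := by rw [ha, hb]; linarith
  set m : ℝ := Real.log (1 + max |a| |b|) with hm
  have hphile : ∀ t ∈ Icc a b, phi t ≤ m := by
    intro t ht
    apply Real.log_le_log (by positivity)
    have : |t| ≤ max |a| |b| := abs_le_max_abs_abs ht.1 ht.2
    linarith
  have hkey : ∫ x in cube c ℓ, ‖fdef n i0 x - ((m:ℝ):ℂ)‖ ≤ 2 * ℓ ^ n := by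
    have heq : ∫ x in cube c ℓ, ‖fdef n i0 x - ((m:ℝ):ℂ)‖ =
        ∫ x in cube c ℓ, (fun t : ℝ => |phi t - m|) (x i0) := by
      refine setIntegral_congr_fun (measurableSet_cube c ℓ) fun x _ => ?_
      exact norm_fdef_sub i0 x m
    rw [heq, cube_integral_factor c hℓ i0 (fun t => |phi t - m|)]
    have h2 : ∫ t in Icc a b, |phi t - m| = ∫ t in Icc a b, (m - phi t) := by
      refine setIntegral_congr_fun measurableSet_Icc fun t ht => ?_
      rw [abs_of_nonpos (by linarith [hphile t ht])]
      ring
    have h3 : ∫ t in Icc a b, (m - phi t) ≤ 2 * ℓ := by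
      rw [MeasureTheory.integral_Icc_eq_integral_Ioc,
        ← intervalIntegral.integral_of_le hab.le]
      have := key1D a b hab
      calc ∫ t in a..b, (m - phi t) ≤ 2 * (b - a) := this
        _ = 2 * ℓ := by rw [ha, hb]; ring
    have hIcc : Icc (c i0 - ℓ/2) (c i0 + ℓ/2) = Icc a b := by rw [ha, hb]
    rw [hIcc, h2]
    calc ℓ ^ (n-1) * ∫ t in Icc a b, (m - phi t) ≤ ℓ ^ (n-1) * (2 * ℓ) :=
          mul_le_mul_of_nonneg_left h3 (by positivity)
      _ = 2 * ℓ ^ n := by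
          rw [show ℓ ^ (n-1) * (2 * ℓ) = 2 * (ℓ ^ (n-1) * ℓ) by ring, ← pow_succ,
            Nat.sub_add_cancel hn]
  refine le_trans (meanOsc_le_of_const (continuous_fdef i0) c hℓ ((m:ℝ):ℂ))
    (ENNReal.ofReal_le_ofReal ?_)
  have hpow : (0:ℝ) < ℓ ^ n := by positivity
  have : (ℓ ^ n)⁻¹ * ∫ x in cube c ℓ, ‖fdef n i0 x - ((m:ℝ):ℂ)‖ ≤ 2 := by
    rw [inv_mul_le_iff₀ hpow]
    calc ∫ x in cube c ℓ, ‖fdef n i0 x - ((m:ℝ):ℂ)‖ ≤ 2 * ℓ ^ n := hkey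
      _ = ℓ ^ n * 2 := by ring
  linarith

lemma memVMO_fdef (hn : 1 ≤ n) (i0 : Fin n) : MemVMO (fdef n i0) := by
  refine ⟨⟨(continuous_fdef i0).locallyIntegrable, ?_⟩, ?_⟩
  · calc bmoSeminorm (fdef n i0)
        ≤ ENNReal.ofReal 4 := by
          refine iSup_le fun c => iSup_le fun ℓ => ?_
          exact meanOsc_fdef_le_four hn i0 c ℓ.2
      _ < ⊤ := ENNReal.ofReal_lt_top
  · have hub : ∀ᶠ r in 𝓝[>] (0:ℝ), osc1 (fdef n i0) r ≤ ENNReal.ofReal r := by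
      refine eventually_mem_nhdsWithin.mono fun r hr => ?_
      refine iSup_le fun c => iSup_le fun ℓ => ?_
      exact le_trans (meanOsc_fdef_le_side i0 c ℓ.2.1) (ENNReal.ofReal_le_ofReal ℓ.2.2)
    have hlb : ∀ᶠ r in 𝓝[>] (0:ℝ), (0:ℝ≥0∞) ≤ osc1 (fdef n i0) r :=
      Filter.Eventually.of_forall fun r => by simp
    have htop : Tendsto (fun r : ℝ => ENNReal.ofReal r) (𝓝[>] (0:ℝ)) (𝓝 0) := by
      have h1 : Tendsto (fun r : ℝ => r) (𝓝[>] (0:ℝ)) (𝓝 0) :=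
        tendsto_id.mono_left nhdsWithin_le_nhds
      simpa using ENNReal.tendsto_ofReal h1
    exact tendsto_of_tendsto_of_tendsto_of_le_of_le' tendsto_const_nhds htop hlb hub

end MainPart

/-! ### Lower bound: distance to bounded functions -/

section LowerBound
open Set

variable {n : ℕ}

lemma chain_bound {h : Edge n → ℂ} (hh : Continuous h) {δ : ℝ} (hδ : 0 ≤ δ)
    (hosc : ∀ (c : Edge n) (ℓ : ℝ), 0 < ℓ → meanOsc h c ℓ ≤ ENNReal.ofReal δ)
    (c : Edge n) (j : ℕ) :
    ‖cubeAvg h c 1 - cubeAvg h c (2^j)‖ ≤ j * (2^n * δ) := by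
  induction j with
  | zero => simp
  | succ j ih =>
    have hsub : cube c ((2:ℝ)^j) ⊆ cube c ((2:ℝ)^(j+1)) :=
      cube_mono c (by rw [pow_succ]; nlinarith [pow_pos (two_pos (α := ℝ)) j])
    have hnest := avg_nested hh (pow_pos two_pos j) (pow_pos two_pos (j+1)) hsub hδ
      (hosc c _ (pow_pos two_pos (j+1)))
    have hratio : ((2:ℝ)^(j+1))^n / ((2:ℝ)^j)^n = 2^n := by
      rw [← div_pow]
      congr 1
      rw [pow_succ]
      field_simp
    rw [hratio] at hnest
    calc ‖cubeAvg h c 1 - cubeAvg h c (2^(j+1))‖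
        ≤ ‖cubeAvg h c 1 - cubeAvg h c (2^j)‖ + ‖cubeAvg h c (2^j) - cubeAvg h c (2^(j+1))‖ := by
          have : cubeAvg h c 1 - cubeAvg h c (2^(j+1)) =
              (cubeAvg h c 1 - cubeAvg h c (2^j)) + (cubeAvg h c (2^j) - cubeAvg h c (2^(j+1))) := by
            abel
          rw [this]; exact norm_add_le _ _
      _ ≤ j * (2^n * δ) + 2^n * δ := add_le_add ih hnest
      _ = (j+1 : ℕ) * (2^n * δ) := by push_cast; ring

lemma cubeAvg_one_eq {h : Edge n → ℂ} (c : Edge n) :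
    cubeAvg h c 1 = ∫ x in cube c 1, h x := by
  simp [cubeAvg]

lemma cubeAvg_sub_fun {f g : Edge n → ℂ} (hf : Continuous f) (hg : Continuous g)
    (c : Edge n) {ℓ : ℝ} (hℓ : 0 < ℓ) :
    cubeAvg (fun x => f x - g x) c ℓ = cubeAvg f c ℓ - cubeAvg g c ℓ := by
  unfold cubeAvg
  rw [integral_sub (integrableOn_cube hf c ℓ) (integrableOn_cube hg c ℓ), smul_sub]

lemma norm_cubeAvg_le {g : Edge n → ℂ} (hg : Continuous g) {K : ℝ} (hK : ∀ x, ‖g x‖ ≤ K)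
    (c : Edge n) : ‖cubeAvg g c 1‖ ≤ K := by
  have hKnn : 0 ≤ K := le_trans (norm_nonneg _) (hK (0 : Edge n))
  rw [cubeAvg_one_eq]
  calc ‖∫ x in cube c 1, g x‖ ≤ ∫ x in cube c 1, ‖g x‖ := norm_integral_le_integral_norm _
    _ ≤ ∫ _x in cube c 1, K :=
        setIntegral_mono_on (integrableOn_cube hg c 1).norm
          (integrableOn_const (volume_cube_lt_top c 1).ne enorm_ne_top)
          (measurableSet_cube c 1) (fun x _ => hK x)
    _ = K := by
        rw [setIntegral_const, smul_eq_mul, measureReal_def, volume_cube_toReal c (by norm_num : (0:ℝ) ≤ 1)]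
        norm_num

lemma re_cubeAvg_fdef_ge (i0 : Fin n) (c : Edge n) :
    phi (c i0) - 1/2 ≤ (cubeAvg (fdef n i0) c 1).re := by
  have hint : IntegrableOn (fdef n i0) (cube c 1) volume :=
    integrableOn_cube (continuous_fdef i0) c 1
  rw [cubeAvg_one_eq]
  have hre : (∫ x in cube c 1, fdef n i0 x).re = ∫ x in cube c 1, phi (x i0) := by
    rw [show (∫ x in cube c 1, fdef n i0 x).re
        = RCLike.re (∫ x in cube c 1, fdef n i0 x) from rfl, ← integral_re hint]
    rfl
  rw [hre]
  have hptw : ∀ x ∈ cube c 1, phi (c i0) - 1/2 ≤ phi (x i0) := by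
    intro x hx
    have h1 := phi_lip (x i0) (c i0)
    have h2 := hx i0
    have := abs_le.1 h1
    linarith [this.1]
  have := setIntegral_mono_on (integrableOn_const (volume_cube_lt_top c 1).ne enorm_ne_top)
    ((continuous_phi.comp (continuous_coord i0)).continuousOn.integrableOn_compact
      (isCompact_cube c 1))
    (measurableSet_cube c 1) hptw
  rw [setIntegral_const, smul_eq_mul, measureReal_def, volume_cube_toReal c (by norm_num : (0:ℝ) ≤ 1)] at this
  calc phi (c i0) - 1/2 = 1 ^ n * (phi (c i0) - 1/2) := by norm_num
    _ ≤ ∫ x in cube c 1, phi (x i0) := this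

lemma re_cubeAvg_fdef_le (i0 : Fin n) (c : Edge n) :
    (cubeAvg (fdef n i0) c 1).re ≤ phi (c i0) + 1/2 := by
  have hint : IntegrableOn (fdef n i0) (cube c 1) volume :=
    integrableOn_cube (continuous_fdef i0) c 1
  rw [cubeAvg_one_eq]
  have hre : (∫ x in cube c 1, fdef n i0 x).re = ∫ x in cube c 1, phi (x i0) := by
    rw [show (∫ x in cube c 1, fdef n i0 x).re
        = RCLike.re (∫ x in cube c 1, fdef n i0 x) from rfl, ← integral_re hint]
    rfl
  rw [hre]
  have hptw : ∀ x ∈ cube c 1, phi (x i0) ≤ phi (c i0) + 1/2 := by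
    intro x hx
    have h1 := phi_lip (x i0) (c i0)
    have h2 := hx i0
    have := abs_le.1 h1
    linarith [this.2]
  have := setIntegral_mono_on
    ((continuous_phi.comp (continuous_coord i0)).continuousOn.integrableOn_compact
      (isCompact_cube c 1))
    (integrableOn_const (volume_cube_lt_top c 1).ne enorm_ne_top)
    (measurableSet_cube c 1) hptw
  rw [setIntegral_const, smul_eq_mul, measureReal_def, volume_cube_toReal c (by norm_num : (0:ℝ) ≤ 1)] at this
  calc ∫ x in cube c 1, phi (x i0) ≤ 1 ^ n * (phi (c i0) + 1/2) := this
    _ = phi (c i0) + 1/2 := by norm_num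

end LowerBound

theorem stmt18 (n : ℕ) (hn : 1 ≤ n) :
    ∃ f : Edge n → ℂ, MemVMO f ∧ ∃ δ : ℝ, 0 < δ ∧
      ∀ g : Edge n → ℂ, UniformContinuous g → (∃ K : ℝ, ∀ x, ‖g x‖ ≤ K) →
        ENNReal.ofReal δ ≤ bmoSeminorm (fun x => f x - g x) := by
  have hi : 0 < n := hn
  set i0 : Fin n := ⟨0, hi⟩ with hi0
  have hlog1 : (0.6931471803 : ℝ) < Real.log 2 := Real.log_two_gt_d9
  have hlog2 : Real.log 2 < 0.6931471808 := Real.log_two_lt_d9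
  set δ : ℝ := Real.log 2 / (8 * 2^n) with hδdef
  have hδpos : 0 < δ := by
    apply div_pos (by linarith) (by positivity)
  refine ⟨fdef n i0, memVMO_fdef hn i0, δ, hδpos, ?_⟩
  intro g hgu hgK
  obtain ⟨K, hK⟩ := hgK
  have hKnn : 0 ≤ K := le_trans (norm_nonneg _) (hK 0)
  by_contra hcon
  push_neg at hcon
  set h : Edge n → ℂ := fun x => fdef n i0 x - g x with hh_def
  have hhc : Continuous h := (continuous_fdef i0).sub hgu.continuous
  have hosc : ∀ (c : Edge n) (ℓ : ℝ), 0 < ℓ → meanOsc h c ℓ ≤ ENNReal.ofReal δ := by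
    intro c ℓ hℓ
    refine le_of_lt (lt_of_le_of_lt ?_ hcon)
    exact le_iSup_of_le c (le_iSup_of_le ⟨ℓ, hℓ⟩ le_rfl)
  obtain ⟨k, hk⟩ := exists_nat_gt (6 * K + 6)
  -- the far-away center
  set ck : Edge n := WithLp.toLp 2 (fun i => if i = i0 then (2:ℝ)^k / 2 else 0 : Fin n → ℝ) with hck
  have hcki0 : ck i0 = (2:ℝ)^k / 2 := by rw [hck]; simp
  have E1 := chain_bound hhc hδpos.le hosc ck k
  have hsub : cube ck ((2:ℝ)^k) ⊆ cube (0 : Edge n) ((2:ℝ)^(k+1)) := by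
    intro x hx i
    have h1 := hx i
    have h2 : |ck i| ≤ (2:ℝ)^k / 2 := by
      rw [hck]
      by_cases hii : i = i0 <;> simp [hii]
      · rw [abs_of_nonneg (by positivity : (0:ℝ) ≤ 2^k/2)]
      · positivity
    have hz : (0 : Edge n) i = 0 := rfl
    have habs : |x i - 0| ≤ |x i - ck i| + |ck i| := by
      have : x i - 0 = (x i - ck i) + ck i := by ring
      rw [this]
      exact abs_add_le _ _
    rw [hz]
    calc |x i - 0| ≤ |x i - ck i| + |ck i| := habs
      _ ≤ (2:ℝ)^k/2 + (2:ℝ)^k/2 := add_le_add h1 h2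
      _ = (2:ℝ)^(k+1)/2 := by rw [pow_succ]; ring
  have E2 := avg_nested hhc (pow_pos two_pos k) (pow_pos two_pos (k+1)) hsub hδpos.le
    (hosc _ _ (pow_pos two_pos (k+1)))
  have hratio : (((2:ℝ)^(k+1))^n / ((2:ℝ)^k)^n) = 2^n := by
    rw [← div_pow]
    congr 1
    rw [pow_succ]
    field_simp
  rw [hratio] at E2
  have E3 := chain_bound hhc hδpos.le hosc (0 : Edge n) (k+1)
  have Etot : ‖cubeAvg h ck 1 - cubeAvg h (0:Edge n) 1‖ ≤ (2*(k:ℝ)+2) * (2^n * δ) := by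
    have hdecomp : cubeAvg h ck 1 - cubeAvg h (0:Edge n) 1 =
        (cubeAvg h ck 1 - cubeAvg h ck (2^k)) +
        (cubeAvg h ck (2^k) - cubeAvg h (0:Edge n) (2^(k+1))) +
        (cubeAvg h (0:Edge n) (2^(k+1)) - cubeAvg h (0:Edge n) 1) := by abel
    have hE3' : ‖cubeAvg h (0:Edge n) (2^(k+1)) - cubeAvg h (0:Edge n) 1‖ ≤
        ((k:ℝ)+1) * (2^n * δ) := by
      rw [norm_sub_rev]
      calc ‖cubeAvg h (0:Edge n) 1 - cubeAvg h (0:Edge n) (2^(k+1))‖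
          ≤ ((k+1 : ℕ) : ℝ) * (2^n * δ) := E3
        _ = ((k:ℝ)+1) * (2^n * δ) := by push_cast; ring
    calc ‖cubeAvg h ck 1 - cubeAvg h (0:Edge n) 1‖
        ≤ ‖cubeAvg h ck 1 - cubeAvg h ck (2^k)‖ +
          ‖cubeAvg h ck (2^k) - cubeAvg h (0:Edge n) (2^(k+1))‖ +
          ‖cubeAvg h (0:Edge n) (2^(k+1)) - cubeAvg h (0:Edge n) 1‖ := by
          rw [hdecomp]
          exact le_trans (norm_add_le _ _) (by gcongr; exact norm_add_le _ _)
      _ ≤ (k:ℝ) * (2^n * δ) + 2^n * δ + ((k:ℝ)+1) * (2^n * δ) :=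
          add_le_add (add_le_add E1 E2) hE3'
      _ = (2*(k:ℝ)+2) * (2^n * δ) := by ring
  -- split the averages
  have hsplit1 : cubeAvg h ck 1 = cubeAvg (fdef n i0) ck 1 - cubeAvg g ck 1 :=
    cubeAvg_sub_fun (continuous_fdef i0) hgu.continuous ck one_pos
  have hsplit0 : cubeAvg h (0:Edge n) 1 =
      cubeAvg (fdef n i0) (0:Edge n) 1 - cubeAvg g (0:Edge n) 1 :=
    cubeAvg_sub_fun (continuous_fdef i0) hgu.continuous (0:Edge n) one_pos
  -- real parts
  have hre_le : (cubeAvg h ck 1 - cubeAvg h (0:Edge n) 1).re ≤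
      ‖cubeAvg h ck 1 - cubeAvg h (0:Edge n) 1‖ := by
    exact Complex.re_le_norm _
  have hgk : |(cubeAvg g ck 1).re| ≤ K := by
    refine le_trans ?_ (norm_cubeAvg_le hgu.continuous hK ck)
    exact Complex.abs_re_le_norm _
  have hg0 : |(cubeAvg g (0:Edge n) 1).re| ≤ K := by
    refine le_trans ?_ (norm_cubeAvg_le hgu.continuous hK (0:Edge n))
    exact Complex.abs_re_le_norm _
  have hfk := re_cubeAvg_fdef_ge i0 ck
  have hf0 := re_cubeAvg_fdef_le i0 (0:Edge n)
  have hphi0 : phi ((0:Edge n) i0) = 0 := by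
    show phi 0 = 0
    simp [phi]
  have hre_eq : (cubeAvg h ck 1 - cubeAvg h (0:Edge n) 1).re =
      (cubeAvg (fdef n i0) ck 1).re - (cubeAvg g ck 1).re
      - (cubeAvg (fdef n i0) (0:Edge n) 1).re + (cubeAvg g (0:Edge n) 1).re := by
    rw [hsplit1, hsplit0]
    simp [Complex.sub_re]
    ring
  -- lower bound on phi (ck i0)
  have hphik : (k:ℝ) * Real.log 2 - Real.log 2 ≤ phi (ck i0) := by
    rw [hcki0]
    have h1 : ((2:ℝ)^k)/2 ≤ 1 + ((2:ℝ)^k)/2 := by linarith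
    have h2 : Real.log (((2:ℝ)^k)/2) ≤ Real.log (1 + ((2:ℝ)^k)/2) :=
      Real.log_le_log (by positivity) h1
    have h3 : Real.log (((2:ℝ)^k)/2) = (k:ℝ) * Real.log 2 - Real.log 2 := by
      rw [Real.log_div (by positivity) (by norm_num), Real.log_pow]
    have h4 : phi (((2:ℝ)^k)/2) = Real.log (1 + |((2:ℝ)^k)/2|) := rfl
    rw [h4, abs_of_nonneg (by positivity)]
    linarith
  -- put everything together
  have hδ8 : (2:ℝ)^n * δ = Real.log 2 / 8 := by
    rw [hδdef]
    field_simp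
  rw [hδ8] at Etot
  have hmain : (k:ℝ) * Real.log 2 - Real.log 2 - 1 - 2*K ≤
      (2*(k:ℝ)+2) * (Real.log 2 / 8) := by
    have habs1 := abs_le.1 hgk
    have habs0 := abs_le.1 hg0
    have : (k:ℝ) * Real.log 2 - Real.log 2 - 1 - 2*K ≤
        (cubeAvg h ck 1 - cubeAvg h (0:Edge n) 1).re := by
      rw [hre_eq]
      have := hphi0
      linarith [hfk, hf0, habs1.1, habs1.2, habs0.1, habs0.2, hphik]
    linarith [hre_le, Etot]
  -- numeric contradiction
  have hknn : (0:ℝ) ≤ (k:ℝ) := Nat.cast_nonneg k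
  have hkL : (0.6931471803 : ℝ) * (k:ℝ) ≤ Real.log 2 * (k:ℝ) :=
    mul_le_mul_of_nonneg_right hlog1.le hknn
  nlinarith [hk, hkL, hKnn]
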